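/- Let A0, A1, B0, B1, E be nonempty finite index types, let F : Matrix B0 B0 ℂ →ₗ Matrix (A0×E) (A0×E) ℂ and G : Matrix (A1×E) (A1×E) ℂ →ₗ Matrix B1 B1 ℂ be quantum channels, and let Θ[N] := G ∘ (N ⊗ id_E) ∘ F be the associated superchannel in realization form. Assume Θ is dephasing-covariant (DISC): for every linear map N : Matrix A0 A0 ℂ →ₗ Matrix A1 A1 ℂ, 𝒟 ∘ Θ[N] ∘ 𝒟 = Θ[𝒟 ∘ N ∘ 𝒟]. Define the dephasing robustness r_Δ(N) := sInf {t : ℝ | 0 ≤ t ∧ (t • 𝒟_{full}(J(N)) − J(N)).PosSemidef}. Then for every quantum channel N from Matrix A0 A0 ℂ to Matrix A1 A1 ℂ, r_Δ(Θ[N]) ≤ r_Δ(N). (The dephasing log-robustness LR_Δ = log₂ r_Δ is a monotone under DISC superchannels.) -/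

import Mathlib

open Matrix Kronecker ComplexOrder

noncomputable section

/-- Choi matrix of a linear map between matrix algebras. -/
def choi {ι κ : Type*} [Fintype ι] [DecidableEq ι]
    (Φ : Matrix ι ι ℂ →ₗ[ℂ] Matrix κ κ ℂ) : Matrix (ι × κ) (ι × κ) ℂ :=
  Matrix.of fun p q => Φ (Matrix.single p.1 q.1 1) p.2 q.2

/-- Completely positive: the Choi matrix is positive semidefinite. -/
def IsCP {ι κ : Type*} [Fintype ι] [DecidableEq ι] [Fintype κ]
    (Φ : Matrix ι ι ℂ →ₗ[ℂ] Matrix κ κ ℂ) : Prop := (choi Φ).PosSemidef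

/-- Trace preserving. -/
def IsTP {ι κ : Type*} [Fintype ι] [Fintype κ]
    (Φ : Matrix ι ι ℂ →ₗ[ℂ] Matrix κ κ ℂ) : Prop := ∀ X, (Φ X).trace = X.trace

/-- Quantum channel: CP and TP. -/
def IsChannel {ι κ : Type*} [Fintype ι] [DecidableEq ι] [Fintype κ]
    (Φ : Matrix ι ι ℂ →ₗ[ℂ] Matrix κ κ ℂ) : Prop := IsCP Φ ∧ IsTP Φ

/-- Max-relative robustness `r(X‖Y)` between two maps. -/
def maxRelRobust {ι κ : Type*} [Fintype ι] [DecidableEq ι] [Fintype κ]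
    (X Y : Matrix ι ι ℂ →ₗ[ℂ] Matrix κ κ ℂ) : ℝ :=
  sInf {t : ℝ | 0 ≤ t ∧ (t • choi Y - choi X).PosSemidef}

/-- Dephasing (decoherence) map as a linear map. -/
def deph {ι : Type*} [DecidableEq ι] : Matrix ι ι ℂ →ₗ[ℂ] Matrix ι ι ℂ where
  toFun M := Matrix.of fun i j => if i = j then M i j else 0
  map_add' X Y := by
    ext i j
    by_cases h : i = j <;> simp [h]
  map_smul' c X := by
    ext i j
    by_cases h : i = j <;> simp [h]

/-- Dephasing robustness `r_Δ(N)`. -/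
def dephRobust {ι κ : Type*} [Fintype ι] [DecidableEq ι] [Fintype κ] [DecidableEq κ]
    (N : Matrix ι ι ℂ →ₗ[ℂ] Matrix κ κ ℂ) : ℝ :=
  sInf {t : ℝ | 0 ≤ t ∧ (t • deph (choi N) - choi N).PosSemidef}

section AuxLemmas

variable {ι κ ξ ξ' : Type*}

lemma deph_apply {ι : Type*} [DecidableEq ι] (M : Matrix ι ι ℂ) (i j : ι) :
    deph M i j = if i = j then M i j else 0 := rfl

lemma linearMap_ext_std [Fintype ι] [DecidableEq ι] {V : Type*} [AddCommMonoid V] [Module ℂ V]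
    {Φ Ψ : Matrix ι ι ℂ →ₗ[ℂ] V}
    (h : ∀ i j, Φ (Matrix.single i j 1) = Ψ (Matrix.single i j 1)) : Φ = Ψ := by
  apply LinearMap.ext
  intro X
  rw [Matrix.matrix_eq_sum_single X]
  have hs : ∀ i j, Matrix.single i j (X i j) = X i j • Matrix.single i j (1 : ℂ) := by
    intro i j
    rw [Matrix.smul_single, smul_eq_mul, mul_one]
  simp_rw [hs, map_sum, _root_.map_smul, h]

def krausMap [Fintype ι] [Fintype κ] [Fintype ξ] (K : ξ → Matrix κ ι ℂ) :
    Matrix ι ι ℂ →ₗ[ℂ] Matrix κ κ ℂ where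
  toFun X := ∑ m, K m * X * (K m)ᴴ
  map_add' X Y := by simp [Matrix.mul_add, Matrix.add_mul, Finset.sum_add_distrib]
  map_smul' c X := by simp [Finset.smul_sum, Matrix.mul_smul, Matrix.smul_mul]

lemma krausMap_apply [Fintype ι] [Fintype κ] [Fintype ξ] (K : ξ → Matrix κ ι ℂ)
    (X : Matrix ι ι ℂ) : krausMap K X = ∑ m, K m * X * (K m)ᴴ := rfl

lemma mul_std_mul [Fintype ι] [Fintype κ] [DecidableEq ι] (K L : Matrix κ ι ℂ) (i j : ι)
    (k l : κ) :
    (K * Matrix.single i j (1 : ℂ) * Lᴴ) k l = K k i * (starRingEnd ℂ) (L l j) := by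
  simp [Matrix.mul_apply, Matrix.single, Matrix.conjTranspose_apply, ite_and,
    mul_ite, ite_mul, mul_zero, zero_mul, mul_one, Finset.sum_ite_eq, Finset.sum_ite_eq']

lemma choi_krausMap_posSemidef [Fintype ι] [Fintype κ] [DecidableEq ι] [Fintype ξ]
    (K : ξ → Matrix κ ι ℂ) : (choi (krausMap K)).PosSemidef := by
  set A : Matrix ξ (ι × κ) ℂ :=
    Matrix.of fun (m : ξ) (p : ι × κ) => (starRingEnd ℂ) (K m p.2 p.1) with hA
  have : choi (krausMap K) = Aᴴ * A := by
    ext p q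
    show (krausMap K) (Matrix.single p.1 q.1 1) p.2 q.2 = (Aᴴ * A) p q
    rw [krausMap_apply, Matrix.sum_apply, Matrix.mul_apply]
    refine Finset.sum_congr rfl fun m _ => ?_
    rw [mul_std_mul]
    simp [hA, Matrix.conjTranspose_apply, mul_comm]
  rw [this]
  exact Matrix.posSemidef_conjTranspose_mul_self _

lemma exists_kraus [Fintype ι] [Fintype κ] [DecidableEq ι]
    {Φ : Matrix ι ι ℂ →ₗ[ℂ] Matrix κ κ ℂ} (hΦ : (choi Φ).PosSemidef) :
    ∃ K : (ι × κ) → Matrix κ ι ℂ, Φ = krausMap K := by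
  obtain ⟨B, hB⟩ : ∃ B : Matrix (ι × κ) (ι × κ) ℂ, choi Φ = Bᴴ * B := by
    classical
    open scoped MatrixOrder in exact CStarAlgebra.nonneg_iff_eq_star_mul_self.mp hΦ.nonneg
  refine ⟨fun m => Matrix.of fun k i => (starRingEnd ℂ) (B m (i, k)), ?_⟩
  apply linearMap_ext_std
  intro i j
  ext k l
  have hΦE : Φ (Matrix.single i j 1) k l = choi Φ ((i, k)) ((j, l)) := rfl
  rw [hΦE, hB]
  rw [krausMap_apply, Matrix.sum_apply, Matrix.mul_apply]
  refine Finset.sum_congr rfl fun m _ => ?_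
  rw [mul_std_mul]
  simp [Matrix.conjTranspose_apply, mul_comm]

lemma krausMap_comp [Fintype ι] [Fintype κ] {ρ : Type*} [Fintype ρ] [Fintype ξ] [Fintype ξ']
    (K2 : ξ' → Matrix ρ κ ℂ) (K1 : ξ → Matrix κ ι ℂ) :
    (krausMap K2) ∘ₗ (krausMap K1) = krausMap (fun p : ξ' × ξ => K2 p.1 * K1 p.2) := by
  apply LinearMap.ext
  intro X
  simp only [LinearMap.comp_apply, krausMap_apply]
  rw [Fintype.sum_prod_type]
  refine Finset.sum_congr rfl fun m2 _ => ?_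
  rw [Matrix.mul_sum, Matrix.sum_mul]
  refine Finset.sum_congr rfl fun m1 _ => ?_
  simp only [Matrix.conjTranspose_mul, Matrix.mul_assoc]

lemma kronecker_conjTranspose' {l m n p : Type*} (A : Matrix l m ℂ) (B : Matrix n p ℂ) :
    (A ⊗ₖ B)ᴴ = Aᴴ ⊗ₖ Bᴴ := by
  ext x y
  simp [Matrix.conjTranspose_apply, Matrix.kroneckerMap_apply, mul_comm]

lemma stdBasis_prod {E : Type*} [DecidableEq ι] [DecidableEq E] (a b : ι) (e f : E) :
    Matrix.single (a, e) (b, f) (1 : ℂ)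
      = Matrix.single a b (1 : ℂ) ⊗ₖ Matrix.single e f (1 : ℂ) := by
  ext ⟨x, y⟩ ⟨u, v⟩
  simp only [Matrix.single, Matrix.kroneckerMap_apply, Matrix.of_apply, Prod.mk.injEq]
  by_cases h1 : a = x <;> by_cases h2 : e = y <;> by_cases h3 : b = u <;> by_cases h4 : f = v <;>
    simp [h1, h2, h3, h4]

lemma choi_sub [Fintype ι] [DecidableEq ι]
    (Φ Ψ : Matrix ι ι ℂ →ₗ[ℂ] Matrix κ κ ℂ) : choi (Φ - Ψ) = choi Φ - choi Ψ := by
  ext p q; simp [choi]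

lemma choi_smul [Fintype ι] [DecidableEq ι] (c : ℂ)
    (Φ : Matrix ι ι ℂ →ₗ[ℂ] Matrix κ κ ℂ) : choi (c • Φ) = c • choi Φ := by
  ext p q; simp [choi]

lemma real_smul_matrix (t : ℝ) (X : Matrix ι κ ℂ) : t • X = (t : ℂ) • X := by
  ext i j
  simp [Matrix.smul_apply, Complex.real_smul]

lemma deph_std (i j : ι) [DecidableEq ι] :
    deph (Matrix.single i j (1 : ℂ))
      = if i = j then Matrix.single i j (1 : ℂ) else 0 := by
  by_cases hij : i = j
  · subst hij
    rw [if_pos rfl]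
    ext a b
    by_cases hab : a = b
    · subst hab; simp [deph_apply]
    · rw [deph_apply, if_neg hab]
      exact (Matrix.single_apply_of_ne _ _ _ _ _
        (by rintro ⟨rfl, rfl⟩; exact hab rfl)).symm
  · rw [if_neg hij]
    ext a b
    rw [deph_apply]
    by_cases hab : a = b
    · subst hab
      simp only [if_pos rfl, Matrix.zero_apply]
      exact Matrix.single_apply_of_ne _ _ _ _ _
        (by rintro ⟨rfl, rfl⟩; exact hij rfl)
    · simp [hab]

lemma choi_deph_deph [Fintype ι] [DecidableEq ι] [Fintype κ] [DecidableEq κ]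
    (N : Matrix ι ι ℂ →ₗ[ℂ] Matrix κ κ ℂ) :
    choi (deph ∘ₗ N ∘ₗ deph) = deph (choi N) := by
  ext ⟨i, k⟩ ⟨j, l⟩
  show (deph (N (deph (Matrix.single i j 1)))) k l = (deph (choi N)) (i, k) (j, l)
  rw [deph_std]
  by_cases hij : i = j
  · subst hij
    by_cases hkl : k = l
    · subst hkl
      simp [deph_apply, choi]
    · simp [deph_apply, choi, hkl, Prod.ext_iff]
  · simp [deph_apply, choi, hij, Prod.ext_iff]

lemma deph_hermitian [Fintype ι] [DecidableEq ι] {J : Matrix ι ι ℂ} (hJ : J.IsHermitian) :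
    (deph J).IsHermitian := by
  ext i j
  by_cases h : i = j
  · subst h
    simpa [deph_apply, Matrix.conjTranspose_apply] using congrFun (congrFun hJ i) i
  · simp [deph_apply, Matrix.conjTranspose_apply, h, Ne.symm h]

end AuxLemmas


section Part2

variable {ι κ : Type*}

lemma normSq_sum_le {ι : Type*} [Fintype ι] (a : ι → ℂ) :
    Complex.normSq (∑ p, a p) ≤ (Fintype.card ι : ℝ) * ∑ p, Complex.normSq (a p) := by
  have h1 : ‖∑ p, a p‖ ≤ ∑ p, ‖a p‖ := by
    simpa using norm_sum_le Finset.univ a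
  calc Complex.normSq (∑ p, a p) = (‖∑ p, a p‖) ^ 2 := Complex.normSq_eq_norm_sq _
    _ ≤ (∑ p, ‖a p‖) ^ 2 := by
        apply pow_le_pow_left₀ (norm_nonneg _) h1
    _ ≤ (Fintype.card ι : ℝ) * ∑ p, (‖a p‖) ^ 2 := by
        simpa [Finset.card_univ] using
          sq_sum_le_card_mul_sum_sq (s := (Finset.univ : Finset ι))
            (f := fun p => ‖a p‖)
    _ = (Fintype.card ι : ℝ) * ∑ p, Complex.normSq (a p) := by
        simp [Complex.normSq_eq_norm_sq]

lemma exists_feasible [Fintype ι] [DecidableEq ι] {J : Matrix ι ι ℂ} (hJ : J.PosSemidef) :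
    ∃ t : ℝ, 0 ≤ t ∧ ((t : ℝ) • deph J - J).PosSemidef := by
  obtain ⟨B, hB⟩ : ∃ B : Matrix ι ι ℂ, J = Bᴴ * B := by
    open scoped MatrixOrder in exact CStarAlgebra.nonneg_iff_eq_star_mul_self.mp hJ.nonneg
  refine ⟨(Fintype.card ι : ℝ), Nat.cast_nonneg _, Matrix.posSemidef_iff_dotProduct_mulVec.mpr ⟨?_, ?_⟩⟩
  · have h1 : (deph J).IsHermitian := deph_hermitian hJ.1
    have h2 : (((Fintype.card ι : ℝ)) • deph J).IsHermitian := by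
      rw [real_smul_matrix]
      unfold Matrix.IsHermitian
      rw [Matrix.conjTranspose_smul, h1.eq]
      norm_num
    exact h2.sub hJ.1
  · intro x
    have hdiag : ∀ p, J p p = ((∑ m, Complex.normSq (B m p) : ℝ) : ℂ) := by
      intro p
      rw [hB, Matrix.mul_apply]
      push_cast
      refine Finset.sum_congr rfl fun m _ => ?_
      rw [Matrix.conjTranspose_apply, Complex.star_def]
      exact (Complex.normSq_eq_conj_mul_self).symm
    have hA : star x ⬝ᵥ (deph J *ᵥ x)
        = ((∑ p, Complex.normSq (x p) * ∑ m, Complex.normSq (B m p) : ℝ) : ℂ) := by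
      have : ∀ p, (deph J *ᵥ x) p = J p p * x p := by
        intro p
        simp [Matrix.mulVec, dotProduct, deph_apply, ite_mul, zero_mul, Finset.sum_ite_eq]
      simp only [dotProduct, this, Pi.star_apply, Complex.star_def, Complex.ofReal_sum]
      refine Finset.sum_congr rfl fun p _ => ?_
      rw [hdiag p, Complex.ofReal_mul, Complex.normSq_eq_conj_mul_self]
      ring
    have hBt : star x ⬝ᵥ (J *ᵥ x) = ((∑ m, Complex.normSq ((B *ᵥ x) m) : ℝ) : ℂ) := by
      rw [hB, ← Matrix.mulVec_mulVec, Matrix.dotProduct_mulVec, Matrix.vecMul_conjTranspose,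
        star_star]
      simp only [dotProduct, Pi.star_apply, Complex.star_def, Complex.ofReal_sum]
      refine Finset.sum_congr rfl fun m _ => ?_
      exact (Complex.normSq_eq_conj_mul_self).symm
    rw [Matrix.sub_mulVec, dotProduct_sub, real_smul_matrix, Matrix.smul_mulVec,
      dotProduct_smul, smul_eq_mul, hA, hBt, ← Complex.ofReal_mul, ← Complex.ofReal_sub]
    rw [Complex.zero_le_real]
    rw [sub_nonneg]
    have key : ∀ m, Complex.normSq ((B *ᵥ x) m)
        ≤ (Fintype.card ι : ℝ) * ∑ p, Complex.normSq (B m p) * Complex.normSq (x p) := by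
      intro m
      have : (B *ᵥ x) m = ∑ p, B m p * x p := by
        simp [Matrix.mulVec, dotProduct]
      rw [this]
      calc Complex.normSq (∑ p, B m p * x p)
          ≤ (Fintype.card ι : ℝ) * ∑ p, Complex.normSq (B m p * x p) := normSq_sum_le _
        _ = (Fintype.card ι : ℝ) * ∑ p, Complex.normSq (B m p) * Complex.normSq (x p) := by
            simp [Complex.normSq_mul]
    calc ∑ m, Complex.normSq ((B *ᵥ x) m)
        ≤ ∑ m, (Fintype.card ι : ℝ) * ∑ p, Complex.normSq (B m p) * Complex.normSq (x p) :=
          Finset.sum_le_sum fun m _ => key m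
      _ = (Fintype.card ι : ℝ) * ∑ p, Complex.normSq (x p) * ∑ m, Complex.normSq (B m p) := by
          rw [← Finset.mul_sum, Finset.sum_comm]
          congr 1
          refine Finset.sum_congr rfl fun p _ => ?_
          rw [Finset.mul_sum]
          refine Finset.sum_congr rfl fun m _ => ?_
          ring

lemma tensorExt_krausMap {A0 A1 E : Type*} [Fintype A0] [DecidableEq A0] [Fintype A1]
    [Fintype E] [DecidableEq E]
    (tensorExt : (Matrix A0 A0 ℂ →ₗ[ℂ] Matrix A1 A1 ℂ) →
      (Matrix (A0 × E) (A0 × E) ℂ →ₗ[ℂ] Matrix (A1 × E) (A1 × E) ℂ))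
    (hext : ∀ (N : Matrix A0 A0 ℂ →ₗ[ℂ] Matrix A1 A1 ℂ)
      (X : Matrix A0 A0 ℂ) (Y : Matrix E E ℂ), tensorExt N (X ⊗ₖ Y) = (N X) ⊗ₖ Y)
    {ξ : Type*} [Fintype ξ] (K : ξ → Matrix A1 A0 ℂ) :
    tensorExt (krausMap K) = krausMap (fun m => K m ⊗ₖ (1 : Matrix E E ℂ)) := by
  apply linearMap_ext_std
  rintro ⟨a, e⟩ ⟨b, f⟩
  rw [stdBasis_prod, hext, krausMap_apply, krausMap_apply]
  have hsum : ∀ (Ms : ξ → Matrix A1 A1 ℂ) (Y : Matrix E E ℂ),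
      (∑ m, Ms m) ⊗ₖ Y = ∑ m, Ms m ⊗ₖ Y := by
    intro Ms Y
    ext ⟨i, e'⟩ ⟨j, f'⟩
    simp [Matrix.kroneckerMap_apply, Matrix.sum_apply, Finset.sum_mul]
  rw [hsum]
  refine Finset.sum_congr rfl fun m _ => ?_
  rw [kronecker_conjTranspose', Matrix.conjTranspose_one, ← Matrix.mul_kronecker_mul,
    ← Matrix.mul_kronecker_mul, Matrix.one_mul, Matrix.mul_one]

lemma theta_choi_psd {A0 A1 B0 B1 E : Type*}
    [Fintype A0] [DecidableEq A0] [Fintype A1] [DecidableEq A1]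
    [Fintype B0] [DecidableEq B0] [Fintype B1] [Fintype E] [DecidableEq E]
    (F : Matrix B0 B0 ℂ →ₗ[ℂ] Matrix (A0 × E) (A0 × E) ℂ)
    (G : Matrix (A1 × E) (A1 × E) ℂ →ₗ[ℂ] Matrix B1 B1 ℂ)
    (tensorExt : (Matrix A0 A0 ℂ →ₗ[ℂ] Matrix A1 A1 ℂ) →
      (Matrix (A0 × E) (A0 × E) ℂ →ₗ[ℂ] Matrix (A1 × E) (A1 × E) ℂ))
    (hext : ∀ (N : Matrix A0 A0 ℂ →ₗ[ℂ] Matrix A1 A1 ℂ)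
      (X : Matrix A0 A0 ℂ) (Y : Matrix E E ℂ), tensorExt N (X ⊗ₖ Y) = (N X) ⊗ₖ Y)
    (hF : (choi F).PosSemidef) (hG : (choi G).PosSemidef)
    {M : Matrix A0 A0 ℂ →ₗ[ℂ] Matrix A1 A1 ℂ} (hM : (choi M).PosSemidef) :
    (choi (G ∘ₗ tensorExt M ∘ₗ F)).PosSemidef := by
  obtain ⟨KF, hKF⟩ := exists_kraus hF
  obtain ⟨KG, hKG⟩ := exists_kraus hG
  obtain ⟨KM, hKM⟩ := exists_kraus hM
  rw [hKF, hKG, hKM, tensorExt_krausMap tensorExt hext, krausMap_comp, krausMap_comp]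
  exact choi_krausMap_posSemidef _

end Part2

/-- The dephasing (log-)robustness is a monotone under dephasing-covariant (DISC)
superchannels given in realization form `Θ[N] = G ∘ (N ⊗ id_E) ∘ F`. -/
theorem dephRobust_DISC_monotone
    {A0 A1 B0 B1 E : Type*}
    [Fintype A0] [DecidableEq A0] [Nonempty A0]
    [Fintype A1] [DecidableEq A1] [Nonempty A1]
    [Fintype B0] [DecidableEq B0] [Nonempty B0]
    [Fintype B1] [DecidableEq B1] [Nonempty B1]
    [Fintype E] [DecidableEq E] [Nonempty E]
    (F : Matrix B0 B0 ℂ →ₗ[ℂ] Matrix (A0 × E) (A0 × E) ℂ)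
    (G : Matrix (A1 × E) (A1 × E) ℂ →ₗ[ℂ] Matrix B1 B1 ℂ)
    (hF : IsChannel F) (hG : IsChannel G)
    (tensorExt : (Matrix A0 A0 ℂ →ₗ[ℂ] Matrix A1 A1 ℂ) →
      (Matrix (A0 × E) (A0 × E) ℂ →ₗ[ℂ] Matrix (A1 × E) (A1 × E) ℂ))
    (hext : ∀ (N : Matrix A0 A0 ℂ →ₗ[ℂ] Matrix A1 A1 ℂ)
      (X : Matrix A0 A0 ℂ) (Y : Matrix E E ℂ), tensorExt N (X ⊗ₖ Y) = (N X) ⊗ₖ Y)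
    (hDISC : ∀ N : Matrix A0 A0 ℂ →ₗ[ℂ] Matrix A1 A1 ℂ,
      deph ∘ₗ (G ∘ₗ tensorExt N ∘ₗ F) ∘ₗ deph = G ∘ₗ tensorExt (deph ∘ₗ N ∘ₗ deph) ∘ₗ F) :
    ∀ N : Matrix A0 A0 ℂ →ₗ[ℂ] Matrix A1 A1 ℂ, IsChannel N →
      dephRobust (G ∘ₗ tensorExt N ∘ₗ F) ≤ dephRobust N := by
  intro N hN
  obtain ⟨t0, ht00, ht0p⟩ := exists_feasible hN.1
  unfold dephRobust
  refine csInf_le_csInf ⟨0, fun s hs => hs.1⟩ ⟨t0, ht00, ht0p⟩ ?_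
  rintro t ⟨ht0, htp⟩
  refine ⟨ht0, ?_⟩
  set M : Matrix A0 A0 ℂ →ₗ[ℂ] Matrix A1 A1 ℂ := (t : ℂ) • (deph ∘ₗ N ∘ₗ deph) - N with hM
  have hMchoi : choi M = (t : ℝ) • deph (choi N) - choi N := by
    rw [hM, choi_sub, choi_smul, choi_deph_deph, real_smul_matrix]
  have hMpsd : (choi M).PosSemidef := by rw [hMchoi]; exact htp
  have hkey := theta_choi_psd F G tensorExt hext hF.1 hG.1 hMpsd
  have hTlin : tensorExt M = (t : ℂ) • tensorExt (deph ∘ₗ N ∘ₗ deph) - tensorExt N := by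
    apply linearMap_ext_std
    rintro ⟨a, e⟩ ⟨b, f⟩
    rw [stdBasis_prod]
    simp only [LinearMap.sub_apply, LinearMap.smul_apply, hext, hM]
    ext ⟨i, g⟩ ⟨j, h'⟩
    simp only [Matrix.kroneckerMap_apply, Matrix.sub_apply, Matrix.smul_apply,
      LinearMap.sub_apply, LinearMap.smul_apply, smul_eq_mul]
    ring
  have hlin : G ∘ₗ tensorExt M ∘ₗ F
      = (t : ℂ) • (G ∘ₗ tensorExt (deph ∘ₗ N ∘ₗ deph) ∘ₗ F) - (G ∘ₗ tensorExt N ∘ₗ F) := by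
    rw [hTlin]
    apply LinearMap.ext
    intro X
    simp [LinearMap.comp_apply, LinearMap.sub_apply, LinearMap.smul_apply, map_sub, _root_.map_smul]
  rw [hlin] at hkey
  have hre : choi ((t : ℂ) • (G ∘ₗ tensorExt (deph ∘ₗ N ∘ₗ deph) ∘ₗ F)
        - (G ∘ₗ tensorExt N ∘ₗ F))
      = (t : ℝ) • deph (choi (G ∘ₗ tensorExt N ∘ₗ F)) - choi (G ∘ₗ tensorExt N ∘ₗ F) := by
    rw [choi_sub, choi_smul, ← hDISC N, choi_deph_deph, real_smul_matrix]
  rw [hre] at hkey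
  exact hkey

end
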